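/- arXiv:1805.01404 — 2 statements merged into one kernel-verified Lean document; each statement's English description precedes it below -/
import Mathlib

section
/- Let n > 2, 0 ≤ m < 2, and p(x) = -x^(1-m/2) ψ'(x) with ψ as above. Then lim_{x↓0} Γ((n-m)/2) p(x) = (n/2 - 1) Γ(1 - m/2); in particular 0 < lim_{x↓0} p(x) < ∞ and sup_{x>0} p(x) < ∞. -/
/-! With `a = n/2 - 1`, `q = -m/2` and `f w = 1 - (w/(1+w))^a`, differentiating under the
integral sign gives `Γ((n-m)/2) p(x) = x^(q+1) ∫₀^∞ h(w) w^q e^(-xw) dw` with `h w = w f(w)`, and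
the substitution `w = u/x` turns the right-hand side into `∫₀^∞ h(u/x) u^q e^(-u) du`. Since
`0 ≤ h ≤ a` and `h(w) → a` as `w → ∞`, dominated convergence gives the limit `a Γ(q+1)` as
`x → 0⁺` (an Abelian theorem for the Laplace transform), and the same domination bounds `p`. -/

open MeasureTheory Real Filter Set Topology

theorem integrableOn_rpow_mul_exp_neg_mul {s b : ℝ} (hs : -1 < s) (hb : 0 < b) :
    IntegrableOn (fun w : ℝ => w ^ s * exp (-b * w)) (Ioi 0) := by
  simpa using integrableOn_rpow_mul_exp_neg_mul_rpow hs one_pos hb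

theorem integral_rpow_mul_exp_neg_eq_Gamma {q : ℝ} (hq : -1 < q) :
    ∫ u in Ioi (0:ℝ), u ^ q * exp (-u) = Gamma (q + 1) := by
  rw [Gamma_eq_integral (by linarith), add_sub_cancel_right]
  simp only [mul_comm]

theorem integrable_const_mul_rpow_mul_exp_neg (c : ℝ) {q : ℝ} (hq : -1 < q) :
    Integrable (fun u => c * (u ^ q * exp (-u))) (volume.restrict (Ioi 0)) := by
  simpa using (integrableOn_rpow_mul_exp_neg_mul hq one_pos).const_mul c

section LaplaceTransform

variable {f : ℝ → ℝ} {q C : ℝ}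

theorem norm_mul_rpow_mul_exp_le (hfC : ∀ w ∈ Ioi (0:ℝ), |f w| ≤ C) {w u b : ℝ} (hw : 0 < w)
    (hu : 0 < u) : ‖f w * u ^ q * exp (-b * u)‖ ≤ C * (u ^ q * exp (-b * u)) := by
  rw [norm_mul, norm_mul, norm_of_nonneg (rpow_nonneg hu.le q), norm_of_nonneg (exp_pos _).le,
    mul_assoc]
  exact mul_le_mul_of_nonneg_right (hfC w hw) (by positivity)

theorem hasDerivAt_integral_mul_rpow_mul_exp (hf : Measurable f)
    (hfC : ∀ w ∈ Ioi (0:ℝ), |f w| ≤ C) (hq : -1 < q) {x₀ : ℝ} (hx₀ : 0 < x₀) :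
    HasDerivAt (fun x => ∫ w in Ioi 0, f w * w ^ q * exp (-x * w))
      (-∫ w in Ioi 0, w * f w * w ^ q * exp (-x₀ * w)) x₀ := by
  have hmeas : ∀ (g : ℝ → ℝ) (r x : ℝ), Measurable g →
      AEStronglyMeasurable (fun w => g w * w ^ r * exp (-x * w)) (volume.restrict (Ioi 0)) :=
    fun g r x hg =>
      (by fun_prop : Measurable fun w => g w * w ^ r * exp (-x * w)).aestronglyMeasurable
  rw [← integral_neg]
  refine (hasDerivAt_integral_of_dominated_loc_of_deriv_le
    (F' := fun x w => -(w * f w * w ^ q * exp (-x * w)))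
    (bound := fun w => C * (w ^ (q + 1) * exp (-(x₀ / 2) * w)))
    (Metric.ball_mem_nhds x₀ (half_pos hx₀)) (.of_forall fun x => hmeas f q x hf) ?_
    ?_ ?_ ?_ ?_).2
  · refine Integrable.mono' ((integrableOn_rpow_mul_exp_neg_mul hq hx₀).const_mul C)
      (hmeas f q x₀ hf) ((ae_restrict_iff' measurableSet_Ioi).2 (.of_forall fun w hw => ?_))
    exact norm_mul_rpow_mul_exp_le hfC hw hw
  · exact (hmeas (fun w => w * f w) q x₀ (by fun_prop)).neg
  · refine (ae_restrict_iff' measurableSet_Ioi).2 (.of_forall fun w (hw : 0 < w) x hx => ?_)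
    have hx : x₀ / 2 < x := by
      rw [Metric.mem_ball, dist_eq] at hx
      linarith [(abs_lt.1 hx).1]
    have hC : 0 ≤ C := (abs_nonneg _).trans (hfC w hw)
    have hw' : w * f w * w ^ q = f w * w ^ (q + 1) := by rw [rpow_add_one hw.ne']; ring
    rw [norm_neg, hw']
    refine (norm_mul_rpow_mul_exp_le hfC hw hw).trans ?_
    gcongr
  · exact (integrableOn_rpow_mul_exp_neg_mul (by linarith) (half_pos hx₀)).const_mul C
  · refine .of_forall fun w x _ => ?_
    have hlin : HasDerivAt (fun x => -x * w) (-w) x := by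
      simpa using (hasDerivAt_neg x).mul_const w
    exact (hlin.exp.const_mul (f w * w ^ q)).congr_deriv (by ring)

theorem rpow_mul_integral_mul_rpow_mul_exp_eq {x : ℝ} (hx : 0 < x) :
    x ^ (q + 1) * ∫ w in Ioi 0, f w * w ^ q * exp (-x * w) =
      ∫ u in Ioi 0, f (u / x) * u ^ q * exp (-u) := by
  have hcv := integral_comp_mul_left_Ioi (fun w => f w * w ^ q * exp (-x * w)) 0 (inv_pos.2 hx)
  rw [mul_zero, inv_inv, smul_eq_mul] at hcv
  rw [rpow_add_one hx.ne', mul_assoc, ← hcv, ← integral_const_mul]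
  refine setIntegral_congr_fun measurableSet_Ioi fun u (hu : 0 < u) => ?_
  rw [mul_rpow (inv_nonneg.2 hx.le) hu.le, inv_rpow hx.le, inv_mul_eq_div]
  field_simp

theorem tendsto_rpow_mul_integral_mul_rpow_mul_exp (hf : Measurable f)
    (hfC : ∀ w ∈ Ioi (0:ℝ), |f w| ≤ C) (hq : -1 < q) {a : ℝ} (hfa : Tendsto f atTop (𝓝 a)) :
    Tendsto (fun x => x ^ (q + 1) * ∫ w in Ioi 0, f w * w ^ q * exp (-x * w)) (𝓝[>] 0)
      (𝓝 (a * Gamma (q + 1))) := by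
  have hlim : Tendsto (fun x => ∫ u in Ioi 0, f (u / x) * u ^ q * exp (-u)) (𝓝[>] 0)
      (𝓝 (∫ u in Ioi 0, a * (u ^ q * exp (-u)))) := by
    refine tendsto_integral_filter_of_dominated_convergence _
      (.of_forall fun x => (by fun_prop : Measurable fun u => f (u / x) * u ^ q * exp (-u))
        |>.aestronglyMeasurable)
      ?_ (integrable_const_mul_rpow_mul_exp_neg C hq)
      ((ae_restrict_iff' measurableSet_Ioi).2 (.of_forall fun u (hu : 0 < u) => ?_))
    · filter_upwards [self_mem_nhdsWithin] with x (hx : 0 < x)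
      refine (ae_restrict_iff' measurableSet_Ioi).2 (.of_forall fun u (hu : 0 < u) => ?_)
      simpa using norm_mul_rpow_mul_exp_le (b := 1) hfC (div_pos hu hx) hu
    · have hux : Tendsto (fun x => u / x) (𝓝[>] 0) atTop := by
        simpa only [div_eq_mul_inv] using tendsto_inv_nhdsGT_zero.const_mul_atTop hu
      simpa only [mul_assoc, Function.comp_def] using
        (hfa.comp hux).mul_const (u ^ q * exp (-u))
  rw [integral_const_mul, integral_rpow_mul_exp_neg_eq_Gamma hq] at hlim
  refine hlim.congr' ?_
  filter_upwards [self_mem_nhdsWithin] with x (hx : 0 < x)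
  exact (rpow_mul_integral_mul_rpow_mul_exp_eq hx).symm

theorem rpow_mul_integral_mul_rpow_mul_exp_le (hfC : ∀ w ∈ Ioi (0:ℝ), |f w| ≤ C) (hq : -1 < q)
    {x : ℝ} (hx : 0 < x) :
    x ^ (q + 1) * ∫ w in Ioi 0, f w * w ^ q * exp (-x * w) ≤ C * Gamma (q + 1) := by
  rw [rpow_mul_integral_mul_rpow_mul_exp_eq hx, ← integral_rpow_mul_exp_neg_eq_Gamma hq,
    ← integral_const_mul]
  refine (Real.le_norm_self _).trans
    (norm_integral_le_of_norm_le (integrable_const_mul_rpow_mul_exp_neg C hq) ?_)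
  refine (ae_restrict_iff' measurableSet_Ioi).2 (.of_forall fun u (hu : 0 < u) => ?_)
  simpa using norm_mul_rpow_mul_exp_le (b := 1) hfC (div_pos hu hx) hu

end LaplaceTransform

section Weight

variable {a w : ℝ}

theorem rpow_div_one_add_mem_Icc (ha : 0 ≤ a) (hw : 0 ≤ w) : (w / (1 + w)) ^ a ∈ Icc 0 1 :=
  ⟨rpow_nonneg (by positivity) a,
    rpow_le_one (by positivity) ((div_le_one (by positivity)).2 (by linarith)) ha⟩

theorem abs_one_sub_rpow_div_one_add_le_one (ha : 0 ≤ a) (hw : 0 ≤ w) :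
    |1 - (w / (1 + w)) ^ a| ≤ 1 := by
  have h := rpow_div_one_add_mem_Icc ha hw
  exact abs_le.2 ⟨by linarith [h.2], by linarith [h.1]⟩

theorem mul_one_sub_rpow_div_one_add_le (ha : 0 ≤ a) (hw : 0 < w) :
    w * (1 - (w / (1 + w)) ^ a) ≤ a := by
  have hσ : 0 < w / (1 + w) := by positivity
  have hlog : -w⁻¹ ≤ log (w / (1 + w)) := by
    have := one_sub_inv_le_log_of_pos hσ
    rw [inv_div, add_div, div_self hw.ne', one_div] at this
    linarith
  have hexp : 1 + a * log (w / (1 + w)) ≤ (w / (1 + w)) ^ a := by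
    rw [rpow_def_of_pos hσ]
    linarith [add_one_le_exp (log (w / (1 + w)) * a)]
  have : -a ≤ w * (a * log (w / (1 + w))) := by
    nlinarith [mul_le_mul_of_nonneg_left hlog (mul_nonneg hw.le ha), mul_inv_cancel₀ hw.ne']
  nlinarith

theorem abs_mul_one_sub_rpow_div_one_add_le (ha : 0 ≤ a) (hw : 0 < w) :
    |w * (1 - (w / (1 + w)) ^ a)| ≤ a := by
  rw [abs_of_nonneg (mul_nonneg hw.le (sub_nonneg.2 (rpow_div_one_add_mem_Icc ha hw.le).2))]
  exact mul_one_sub_rpow_div_one_add_le ha hw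

-- `w (1 - (w / (1 + w)) ^ a)` is minus the difference quotient of `t ↦ (1 + t) ^ (-a)` at
-- `0` with step `t = w⁻¹`.
theorem tendsto_mul_one_sub_rpow_div_one_add (a : ℝ) :
    Tendsto (fun w : ℝ => w * (1 - (w / (1 + w)) ^ a)) atTop (𝓝 a) := by
  have hderiv : HasDerivAt (fun t : ℝ => (1 + t) ^ (-a)) (-a) 0 := by
    simpa using ((hasDerivAt_id (0:ℝ)).const_add 1).rpow_const (p := -a) (by norm_num)
  have hslope := (hderiv.tendsto_slope.mono_left (nhdsGT_le_nhdsNE 0)).comp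
    tendsto_inv_atTop_nhdsGT_zero
  refine (hslope.neg.congr' ?_).trans (by rw [neg_neg])
  filter_upwards [eventually_gt_atTop 0] with w hw
  have hpos : (0:ℝ) ≤ 1 + w⁻¹ := by positivity
  have hσ : w / (1 + w) = (1 + w⁻¹)⁻¹ := by field_simp; ring
  simp only [Function.comp_apply, slope_def_field, hσ, inv_rpow hpos, ← rpow_neg hpos]
  field_simp
  simp

end Weight

theorem p_limit_at_zero_general (n m : ℝ) (hn : 2 < n) (hm2 : m < 2)
    (ψ : ℝ → ℝ)
    (hψ : ∀ x : ℝ, ψ x = (1 / Real.Gamma ((n - m) / 2)) *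
      ∫ w in Set.Ioi (0:ℝ),
        (1 - (w / (1 + w)) ^ (n / 2 - 1)) * w ^ (-m / 2) * Real.exp (-x * w))
    (p : ℝ → ℝ) (hp : ∀ x : ℝ, p x = -x ^ (1 - m / 2) * deriv ψ x) :
    Tendsto (fun x => Real.Gamma ((n - m) / 2) * p x) (nhdsWithin 0 (Set.Ioi 0))
        (nhds ((n / 2 - 1) * Real.Gamma (1 - m / 2))) ∧
      (∃ l : ℝ, 0 < l ∧
        Tendsto p (nhdsWithin 0 (Set.Ioi 0)) (nhds l)) ∧
      ∃ C : ℝ, ∀ x : ℝ, 0 < x → p x ≤ C := by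
  have ha : 0 < n / 2 - 1 := by linarith
  have hq : -1 < -m / 2 := by linarith
  have hΓ₀ : 0 < Gamma ((n - m) / 2) := Gamma_pos_of_pos (by linarith)
  have hΓ : 0 < Gamma (1 - m / 2) := Gamma_pos_of_pos (by linarith)
  have hq1 : -m / 2 + 1 = 1 - m / 2 := by ring
  set a := n / 2 - 1
  set Γ₀ := Gamma ((n - m) / 2)
  set f := fun w : ℝ => 1 - (w / (1 + w)) ^ a
  have hf : ∀ w ∈ Ioi (0:ℝ), |f w| ≤ 1 := fun w hw =>
    abs_one_sub_rpow_div_one_add_le_one ha.le hw.le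
  have hwf : ∀ w ∈ Ioi (0:ℝ), |w * f w| ≤ a := fun w hw =>
    abs_mul_one_sub_rpow_div_one_add_le ha.le hw
  have hΓp : ∀ x, 0 < x → Γ₀ * p x =
      x ^ (-m / 2 + 1) * ∫ w in Ioi 0, w * f w * w ^ (-m / 2) * exp (-x * w) := by
    intro x hx
    have hderiv := (hasDerivAt_integral_mul_rpow_mul_exp (by fun_prop) hf hq hx).const_mul (1 / Γ₀)
    rw [hp, funext hψ, hq1, hderiv.deriv]
    generalize (∫ w in Ioi 0, w * f w * w ^ (-m / 2) * exp (-x * w)) = I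
    field_simp
  have hlim : Tendsto (fun x => Γ₀ * p x) (𝓝[>] 0) (𝓝 (a * Gamma (-m / 2 + 1))) :=
    (tendsto_rpow_mul_integral_mul_rpow_mul_exp (by fun_prop) hwf hq
      (tendsto_mul_one_sub_rpow_div_one_add a)).congr'
      (eventually_nhdsWithin_of_forall fun x hx => (hΓp x hx).symm)
  rw [hq1] at hlim
  refine ⟨hlim, ⟨Γ₀⁻¹ * (a * Gamma (1 - m / 2)), by positivity, ?_⟩,
    Γ₀⁻¹ * (a * Gamma (1 - m / 2)), fun x hx => ?_⟩
  · simpa [hΓ₀.ne'] using hlim.const_mul Γ₀⁻¹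
  · rw [le_inv_mul_iff₀ hΓ₀, hΓp x hx, ← hq1]
    exact rpow_mul_integral_mul_rpow_mul_exp_le hwf hq hx

theorem p_limit_at_zero (n m : ℝ) (hn : 2 < n) (hm0 : 0 ≤ m) (hm2 : m < 2)
    (ψ : ℝ → ℝ)
    (hψ : ∀ x : ℝ, ψ x = (1 / Real.Gamma ((n - m) / 2)) *
      ∫ w in Set.Ioi (0:ℝ),
        (1 - (w / (1 + w)) ^ (n / 2 - 1)) * w ^ (-m / 2) * Real.exp (-x * w))
    (p : ℝ → ℝ) (hp : ∀ x : ℝ, p x = -x ^ (1 - m / 2) * deriv ψ x) :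
    Tendsto (fun x => Real.Gamma ((n - m) / 2) * p x) (nhdsWithin 0 (Set.Ioi 0))
        (nhds ((n / 2 - 1) * Real.Gamma (1 - m / 2))) ∧
      (∃ l : ℝ, 0 < l ∧
        Tendsto p (nhdsWithin 0 (Set.Ioi 0)) (nhds l)) ∧
      ∃ C : ℝ, ∀ x : ℝ, 0 < x → p x ≤ C :=
  p_limit_at_zero_general n m hn hm2 ψ hψ p hp
end

section
/- Let n > 2, 0 ≤ m < 2 and t > 0. With ψ as defined by ψ(x) = (1/Γ((n-m)/2)) ∫₀^∞ (1 - (w/(1+w))^(n/2-1)) w^(-m/2) e^(-xw) dw, the limit lim_{x↓0} x^(1-m/2) (2t)^(-(n-m)/2) ψ(x/(2t)) = 0 holds. -/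
open MeasureTheory Real Filter Topology

/-!
The factor `1 - (w / (1 + w)) ^ p` is at most `1` and at most `max p 1 / w`, hence at most
`(max p 1 / w) ^ δ` for every `δ ∈ [0, 1]`. Taking `δ = (2 - m) / 4`, a Gamma integral gives
`ψ u = O(u ^ (-δ))` as `u ↓ 0`, so `x ^ (1 - m / 2) * ψ (x / 2t) = O(x ^ δ) → 0`.
-/

theorem one_sub_rpow_le_max_mul {x p : ℝ} (hx0 : 0 ≤ x) (hx1 : x ≤ 1) :
    1 - x ^ p ≤ max p 1 * (1 - x) := by
  rcases le_total 1 p with hp | hp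
  · have bernoulli := one_add_mul_self_le_rpow_one_add (s := x - 1) (by linarith) hp
    rw [add_sub_cancel] at bernoulli
    rw [max_eq_left hp]
    linarith
  · rw [max_eq_right hp, one_mul]
    linarith [self_le_rpow_of_le_one hx0 hx1 hp]

theorem min_one_le_rpow {a δ : ℝ} (ha : 0 ≤ a) (hδ0 : 0 ≤ δ) (hδ1 : δ ≤ 1) :
    min 1 a ≤ a ^ δ := by
  rcases le_total a 1 with h | h
  · exact (min_le_right 1 a).trans (self_le_rpow_of_le_one ha h hδ1)
  · exact (min_le_left 1 a).trans (one_le_rpow h hδ0)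

section

variable {p w : ℝ}

theorem one_sub_div_one_add_rpow_nonneg (hp : 0 ≤ p) (hw : 0 ≤ w) :
    0 ≤ 1 - (w / (1 + w)) ^ p := by
  have hr : w / (1 + w) ≤ 1 := div_le_one_of_le₀ (by linarith) (by linarith)
  linarith [rpow_le_one (by positivity) hr hp]

theorem one_sub_div_one_add_rpow_le {δ : ℝ} (hδ0 : 0 ≤ δ) (hδ1 : δ ≤ 1)
    (hw : 0 < w) : 1 - (w / (1 + w)) ^ p ≤ max p 1 ^ δ * w ^ (-δ) := by
  have hr1 : w / (1 + w) ≤ 1 := div_le_one_of_le₀ (by linarith) (by linarith)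
  have h_one_sub : 1 - w / (1 + w) = 1 / (1 + w) := by field_simp; ring
  have h_decay : 1 - (w / (1 + w)) ^ p ≤ max p 1 / w := calc
    1 - (w / (1 + w)) ^ p ≤ max p 1 * (1 / (1 + w)) :=
      h_one_sub ▸ one_sub_rpow_le_max_mul (by positivity) hr1
    _ ≤ max p 1 / w := by
      rw [mul_one_div]; gcongr; linarith
  calc 1 - (w / (1 + w)) ^ p
      ≤ min 1 (max p 1 / w) := by
        refine le_min ?_ h_decay
        linarith [rpow_nonneg (div_nonneg hw.le (by linarith : (0:ℝ) ≤ 1 + w)) p]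
    _ ≤ (max p 1 / w) ^ δ := min_one_le_rpow (by positivity) hδ0 hδ1
    _ = max p 1 ^ δ * w ^ (-δ) := by
      rw [div_rpow (by positivity) hw.le, rpow_neg hw.le, div_eq_mul_inv]

end

noncomputable def psiIntegrand (p q u w : ℝ) : ℝ :=
  (1 - (w / (1 + w)) ^ p) * w ^ q * exp (-u * w)

section

variable {p q u : ℝ}

theorem psiIntegrand_nonneg (hp : 0 ≤ p) {w : ℝ} (hw : 0 ≤ w) : 0 ≤ psiIntegrand p q u w :=
  mul_nonneg (mul_nonneg (one_sub_div_one_add_rpow_nonneg hp hw) (rpow_nonneg hw q))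
    (exp_pos _).le

theorem psiIntegrand_le {δ w : ℝ} (hδ0 : 0 ≤ δ) (hδ1 : δ ≤ 1) (hw : 0 < w) :
    psiIntegrand p q u w ≤ max p 1 ^ δ * (w ^ (q - δ) * exp (-(u * w))) :=
  calc psiIntegrand p q u w
      ≤ max p 1 ^ δ * w ^ (-δ) * w ^ q * exp (-u * w) := by
        unfold psiIntegrand
        gcongr
        exact one_sub_div_one_add_rpow_le hδ0 hδ1 hw
    _ = max p 1 ^ δ * (w ^ (q - δ) * exp (-(u * w))) := by
        rw [mul_assoc (max p 1 ^ δ), ← rpow_add hw, neg_mul]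
        ring_nf

theorem setIntegral_psiIntegrand_nonneg (hp : 0 ≤ p) :
    0 ≤ ∫ w in Set.Ioi (0:ℝ), psiIntegrand p q u w :=
  setIntegral_nonneg measurableSet_Ioi fun _ hw ↦ psiIntegrand_nonneg hp (le_of_lt hw)

theorem setIntegral_psiIntegrand_le {δ : ℝ} (hp : 0 ≤ p) (hδ0 : 0 ≤ δ) (hδ1 : δ ≤ 1)
    (hqδ : 0 < q - δ + 1) (hu : 0 < u) :
    ∫ w in Set.Ioi (0:ℝ), psiIntegrand p q u w
      ≤ max p 1 ^ δ * Gamma (q - δ + 1) * u ^ (-(q - δ + 1)) := by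
  set a := q - δ + 1
  have h_gamma : ∫ w in Set.Ioi (0:ℝ), w ^ (q - δ) * exp (-(u * w)) = Gamma a * u ^ (-a) := by
    rw [show q - δ = a - 1 by ring, integral_rpow_mul_exp_neg_mul_Ioi hqδ hu, one_div,
      inv_rpow hu.le, rpow_neg hu.le, mul_comm]
  have h_int : IntegrableOn (fun w ↦ w ^ (q - δ) * exp (-(u * w))) (Set.Ioi 0) :=
    .of_integral_ne_zero (by rw [h_gamma]; have := Gamma_pos_of_pos hqδ; positivity)
  calc _ ≤ ∫ w in Set.Ioi (0:ℝ), max p 1 ^ δ * (w ^ (q - δ) * exp (-(u * w))) :=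
        setIntegral_mono_of_nonneg (fun _ hw ↦ psiIntegrand_nonneg hp (le_of_lt hw))
          (fun _ hw ↦ psiIntegrand_le hδ0 hδ1 hw) (h_int.const_mul _)
    _ = _ := by rw [integral_const_mul, h_gamma, mul_assoc]

end

theorem tendsto_rpow_mul_comp_div_nhdsGT_zero {f : ℝ → ℝ} {K a b c : ℝ} (hab : a < b)
    (hc : 0 < c) (hf0 : ∀ u > 0, 0 ≤ f u) (hf : ∀ u > 0, f u ≤ K * u ^ (-a)) :
    Tendsto (fun x ↦ x ^ b * f (x / c)) (𝓝[>] 0) (𝓝 0) := by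
  have h_bound : ∀ x > 0, x ^ b * f (x / c) ≤ K * c ^ a * x ^ (b - a) := fun x hx ↦ calc
    x ^ b * f (x / c) ≤ x ^ b * (K * (x / c) ^ (-a)) := by gcongr; exact hf _ (div_pos hx hc)
    _ = K * c ^ a * x ^ (b - a) := by
      rw [div_rpow hx.le hc.le, rpow_neg hc.le, div_inv_eq_mul, sub_eq_add_neg, rpow_add hx]
      ring
  have h_pow : Tendsto (fun x : ℝ ↦ x ^ (b - a)) (𝓝[>] 0) (𝓝 0) := by
    have h := (continuousAt_rpow_const 0 (b - a) (Or.inr (by linarith))).tendsto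
    rw [zero_rpow (by linarith)] at h
    exact h.mono_left nhdsWithin_le_nhds
  refine squeeze_zero' ?_ ?_ (by simpa using h_pow.const_mul (K * c ^ a))
  · filter_upwards [self_mem_nhdsWithin] with x (hx : 0 < x)
    exact mul_nonneg (by positivity) (hf0 _ (div_pos hx hc))
  · filter_upwards [self_mem_nhdsWithin] with x hx using h_bound x hx

theorem psi_term_vanishes (n m t : ℝ) (hn : 2 < n) (hm0 : 0 ≤ m) (hm2 : m < 2) (ht : 0 < t)
    (ψ : ℝ → ℝ)
    (hψ : ∀ u : ℝ, ψ u = (1 / Real.Gamma ((n - m) / 2)) *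
      ∫ w in Set.Ioi (0:ℝ),
        (1 - (w / (1 + w)) ^ (n / 2 - 1)) * w ^ (-m / 2) * Real.exp (-u * w)) :
    Tendsto (fun x : ℝ => x ^ (1 - m / 2) * (2 * t) ^ (-((n - m) / 2)) * ψ (x / (2 * t)))
      (nhdsWithin 0 (Set.Ioi 0)) (nhds 0) := by
  set δ := (2 - m) / 4 with hδ
  have hΓ : 0 < Gamma ((n - m) / 2) := Gamma_pos_of_pos (by linarith)
  have hψ_eq : ∀ u, ψ u =
      (1 / Gamma ((n - m) / 2)) * ∫ w in Set.Ioi (0:ℝ), psiIntegrand (n / 2 - 1) (-m / 2) u w :=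
    hψ
  have hψ_nonneg : ∀ u > 0, 0 ≤ ψ u := fun u _ ↦ by
    rw [hψ_eq]
    exact mul_nonneg (by positivity) (setIntegral_psiIntegrand_nonneg (by linarith))
  have hψ_le : ∀ u > 0,
      ψ u ≤ 1 / Gamma ((n - m) / 2) * (max (n / 2 - 1) 1 ^ δ * Gamma δ) * u ^ (-δ) := by
    intro u hu
    have h := setIntegral_psiIntegrand_le (p := n / 2 - 1) (q := -m / 2) (δ := δ)
      (by linarith) (by positivity) (by linarith) (by linarith) hu
    rw [show -m / 2 - δ + 1 = δ by linarith] at h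
    rw [hψ_eq, mul_assoc]
    gcongr
  have h := (tendsto_rpow_mul_comp_div_nhdsGT_zero (b := 1 - m / 2) (by linarith)
    (by linarith : (0:ℝ) < 2 * t) hψ_nonneg hψ_le).const_mul ((2 * t) ^ (-((n - m) / 2)))
  convert h using 2 with x
  · ring
  · rw [mul_zero]
end
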